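/- For fixed t ∈ [0,1) and z ∈ ℝ, the map r ↦ v_r(t,z) is Lipschitz continuous on ℝ, where v_r is the explicit value function for stopping a Brownian bridge with known pinning point r. -/

import Mathlib

open Real Set

/-- The standard normal cumulative distribution function. -/
noncomputable def Phi (x : ℝ) : ℝ :=
  (Real.sqrt (2 * Real.pi))⁻¹ * ∫ u in Set.Iic x, Real.exp (-u ^ 2 / 2)

/-- The value function for optimally stopping a Brownian bridge with known pinning point `r`. -/
noncomputable def vr (β r t z : ℝ) : ℝ :=
  if z < r + β * Real.sqrt (1 - t) then
    r + Real.sqrt (2 * Real.pi * (1 - t)) * (1 - β ^ 2) *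
      Real.exp ((z - r) ^ 2 / (2 * (1 - t))) * Phi ((z - r) / Real.sqrt (1 - t))
  else z

/-!
In the variable `x = (z - r) / √(1 - t)` one has `v_r(t, z) = r + √(1 - t) h(x)` with
`h(x) = (1 - β²) R(x)` for `x < β` and `h(x) = x` otherwise, where `R = Φ / φ`. Since `β` is a root,
the two pieces agree at `β`, so `h(x) = (1 - β²) R(min x β) + (x - min x β)`, and it suffices that
`R` is Lipschitz on `(-∞, β]`. There `R' = x R + 1` is bounded above because `Φ ≤ 1`, and below
by `0` by Mills' inequality.
-/

open MeasureTheory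

lemma integrable_exp_neg_sq_div_two : Integrable fun u : ℝ => exp (-u ^ 2 / 2) := by
  simpa [neg_div, div_eq_inv_mul] using integrable_exp_neg_mul_sq (b := 1 / 2) (by norm_num)

lemma integral_exp_neg_sq_div_two : ∫ u : ℝ, exp (-u ^ 2 / 2) = √(2 * π) := by
  simpa [neg_div, div_eq_inv_mul] using integral_gaussian (1 / 2)

lemma Phi_nonneg (x : ℝ) : 0 ≤ Phi x :=
  mul_nonneg (by positivity) (setIntegral_nonneg measurableSet_Iic fun _ _ => (exp_pos _).le)

lemma Phi_le_one (x : ℝ) : Phi x ≤ 1 := by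
  have h := setIntegral_le_integral (s := Iic x) integrable_exp_neg_sq_div_two
    (.of_forall fun _ => (exp_pos _).le)
  rw [integral_exp_neg_sq_div_two] at h
  calc Phi x ≤ (√(2 * π))⁻¹ * √(2 * π) := mul_le_mul_of_nonneg_left h (by positivity)
    _ = 1 := inv_mul_cancel₀ (by positivity)

lemma hasDerivAt_Phi (x : ℝ) : HasDerivAt Phi ((√(2 * π))⁻¹ * exp (-x ^ 2 / 2)) x := by
  have hcont : Continuous fun u : ℝ => exp (-u ^ 2 / 2) := by fun_prop
  have hPhi : Phi = fun y => (√(2 * π))⁻¹ *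
      ((∫ u in (0 : ℝ)..y, exp (-u ^ 2 / 2)) + ∫ u in Iic 0, exp (-u ^ 2 / 2)) := by
    funext y
    rw [← intervalIntegral.integral_Iic_sub_Iic integrable_exp_neg_sq_div_two.integrableOn
      integrable_exp_neg_sq_div_two.integrableOn, sub_add_cancel]
    rfl
  rw [hPhi]
  exact ((intervalIntegral.integral_hasDerivAt_right integrable_exp_neg_sq_div_two.intervalIntegrable
    (hcont.stronglyMeasurableAtFilter _ _) hcont.continuousAt).add_const _).const_mul _

/-- Mills' inequality for the lower tail, from `-u²/2 ≤ x²/2 - x u`. -/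
lemma neg_mul_Phi_le {x : ℝ} (hx : x < 0) : -x * Phi x ≤ (√(2 * π))⁻¹ * exp (-x ^ 2 / 2) := by
  have hbound : ∫ u in Iic x, exp (-u ^ 2 / 2) ≤ ∫ u in Iic x, exp (x ^ 2 / 2) * exp (-x * u) :=
    setIntegral_mono integrable_exp_neg_sq_div_two.integrableOn
      ((integrableOn_exp_mul_Iic (neg_pos.2 hx) x).const_mul _) fun u => by
        rw [← exp_add]
        exact exp_le_exp.2 (by nlinarith [sq_nonneg (u - x)])
  rw [integral_const_mul, integral_exp_mul_Iic (neg_pos.2 hx), ← mul_div_assoc, ← exp_add,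
    show x ^ 2 / 2 + -x * x = -x ^ 2 / 2 by ring, le_div_iff₀ (neg_pos.2 hx)] at hbound
  calc -x * Phi x = (√(2 * π))⁻¹ * ((∫ u in Iic x, exp (-u ^ 2 / 2)) * -x) := by
        unfold Phi; ring
    _ ≤ _ := mul_le_mul_of_nonneg_left hbound (by positivity)

/-- `Φ(x) / φ(x)`, where `φ` is the standard normal density. -/
noncomputable def cdfPdfRatio (x : ℝ) : ℝ := √(2 * π) * exp (x ^ 2 / 2) * Phi x

lemma cdfPdfRatio_nonneg (x : ℝ) : 0 ≤ cdfPdfRatio x :=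
  mul_nonneg (by positivity) (Phi_nonneg x)

lemma hasDerivAt_cdfPdfRatio (x : ℝ) :
    HasDerivAt cdfPdfRatio (x * cdfPdfRatio x + 1) x := by
  have hexp : HasDerivAt (fun x : ℝ => exp (x ^ 2 / 2)) (exp (x ^ 2 / 2) * x) x := by
    simpa using ((hasDerivAt_pow 2 x).div_const 2).exp
  have hsqrt : √(2 * π) * (√(2 * π))⁻¹ = 1 := mul_inv_cancel₀ (by positivity)
  have hexp_neg : exp (x ^ 2 / 2) * exp (-x ^ 2 / 2) = 1 := by
    rw [← exp_add]; simp [neg_div]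
  refine ((hexp.const_mul _).mul (hasDerivAt_Phi x)).congr_deriv ?_
  unfold cdfPdfRatio
  linear_combination exp (x ^ 2 / 2) * exp (-x ^ 2 / 2) * hsqrt + hexp_neg

lemma neg_one_le_mul_cdfPdfRatio (x : ℝ) : -1 ≤ x * cdfPdfRatio x := by
  rcases le_or_gt 0 x with hx | hx
  · linarith [mul_nonneg hx (cdfPdfRatio_nonneg x)]
  have hexp_neg : exp (x ^ 2 / 2) * exp (-x ^ 2 / 2) = 1 := by
    rw [← exp_add]; simp [neg_div]
  have hsqrt : √(2 * π) * (√(2 * π))⁻¹ = 1 := mul_inv_cancel₀ (by positivity)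
  have hmills := mul_le_mul_of_nonneg_left (neg_mul_Phi_le hx)
    (by positivity : 0 ≤ √(2 * π) * exp (x ^ 2 / 2))
  unfold cdfPdfRatio
  nlinarith

lemma mul_cdfPdfRatio_le {x b : ℝ} (hx : x ≤ b) :
    x * cdfPdfRatio x ≤ |b| * (√(2 * π) * exp (b ^ 2 / 2)) := by
  rcases le_or_gt x 0 with hx0 | hx0
  · exact (mul_nonpos_of_nonpos_of_nonneg hx0 (cdfPdfRatio_nonneg x)).trans (by positivity)
  have hratio : cdfPdfRatio x ≤ √(2 * π) * exp (b ^ 2 / 2) := by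
    calc cdfPdfRatio x ≤ √(2 * π) * exp (x ^ 2 / 2) * 1 :=
          mul_le_mul_of_nonneg_left (Phi_le_one x) (by positivity)
      _ ≤ √(2 * π) * exp (b ^ 2 / 2) := by
          rw [mul_one]; gcongr
  exact mul_le_mul (hx.trans (le_abs_self b)) hratio (cdfPdfRatio_nonneg x) (abs_nonneg b)

lemma lipschitzOnWith_cdfPdfRatio_Iic (b : ℝ) :
    LipschitzOnWith (‖b‖₊ * ‖√(2 * π) * exp (b ^ 2 / 2)‖₊ + 1) cdfPdfRatio (Iic b) := by
  refine (convex_Iic b).lipschitzOnWith_of_nnnorm_hasDerivWithin_le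
    (fun x _ => (hasDerivAt_cdfPdfRatio x).hasDerivWithinAt) fun x hx => ?_
  rw [← NNReal.coe_le_coe]
  push_cast
  simp only [norm_eq_abs]
  rw [abs_of_nonneg (a := x * _ + 1) (by linarith [neg_one_le_mul_cdfPdfRatio x]),
    abs_of_pos (a := √(2 * π) * _) (by positivity)]
  linarith [mul_cdfPdfRatio_le (mem_Iic.1 hx)]

noncomputable def vrProfile (β x : ℝ) : ℝ := if x < β then (1 - β ^ 2) * cdfPdfRatio x else x

lemma vr_eq_add_mul_vrProfile (β r z : ℝ) {t : ℝ} (ht : t < 1) :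
    vr β r t z = r + √(1 - t) * vrProfile β ((z - r) / √(1 - t)) := by
  have hs : 0 < √(1 - t) := sqrt_pos.2 (sub_pos.2 ht)
  have hcond : z < r + β * √(1 - t) ↔ (z - r) / √(1 - t) < β := by
    rw [div_lt_iff₀ hs]; constructor <;> intro h <;> linarith
  unfold vr vrProfile
  rw [if_congr hcond rfl rfl]
  split_ifs
  · have hsqrt : √(2 * π * (1 - t)) = √(2 * π) * √(1 - t) := sqrt_mul (by positivity) _
    have hexp : (z - r) ^ 2 / (2 * (1 - t)) = ((z - r) / √(1 - t)) ^ 2 / 2 := by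
      rw [div_pow, sq_sqrt (sub_pos.2 ht).le, div_div, mul_comm]
    rw [hsqrt, hexp, cdfPdfRatio]
    ring
  · field_simp
    ring

lemma vrProfile_eq_min {β : ℝ} (hroot : (1 - β ^ 2) * cdfPdfRatio β = β) (x : ℝ) :
    vrProfile β x = (1 - β ^ 2) * cdfPdfRatio (min x β) + (x - min x β) := by
  unfold vrProfile
  split_ifs with hx
  · rw [min_eq_left hx.le]; ring
  · rw [min_eq_right (not_lt.1 hx), hroot]; ring

lemma lipschitzWith_vrProfile {β : ℝ} (hroot : (1 - β ^ 2) * cdfPdfRatio β = β) :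
    ∃ K, LipschitzWith K (vrProfile β) := by
  have hmin : LipschitzWith 1 fun x : ℝ => min x β := LipschitzWith.id.min_const β
  have hratio := (lipschitzOnWith_cdfPdfRatio_Iic β).comp (hmin.lipschitzOnWith (s := univ))
    fun x _ => min_le_right x β
  rw [lipschitzOnWith_univ] at hratio
  have hprofile : vrProfile β =
      fun x => (1 - β ^ 2) • (cdfPdfRatio ∘ fun x => min x β) x + (id x - min x β) :=
    funext (vrProfile_eq_min hroot)
  exact ⟨_, hprofile ▸ ((lipschitzWith_smul _).comp hratio).add (LipschitzWith.id.sub hmin)⟩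

lemma LipschitzWith.add_mul_comp_div {h : ℝ → ℝ} {K : NNReal} (hh : LipschitzWith K h)
    {s : ℝ} (hs : 0 < s) (z : ℝ) : LipschitzWith (1 + K) fun r => r + s * h ((z - r) / s) := by
  refine LipschitzWith.of_dist_le_mul fun r r' => ?_
  have hdist : dist ((z - r) / s) ((z - r') / s) = dist r r' / s := by
    rw [dist_eq, dist_eq, ← sub_div, abs_div, abs_of_pos hs, abs_sub_comm]
    congr 2; ring
  calc dist (r + s * h ((z - r) / s)) (r' + s * h ((z - r') / s))
      ≤ dist r r' + s * dist (h ((z - r) / s)) (h ((z - r') / s)) := by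
        refine (dist_add_add_le _ _ _ _).trans_eq ?_
        rw [← smul_eq_mul, ← smul_eq_mul, dist_smul₀, norm_of_nonneg hs.le]
    _ ≤ dist r r' + s * (K * (dist r r' / s)) := by
        gcongr; exact hdist ▸ hh.dist_le_mul _ _
    _ = (1 + K : NNReal) * dist r r' := by
        push_cast; field_simp

theorem stmt3_general (β t z : ℝ)
    (hroot : Real.sqrt (2 * Real.pi) * (1 - β ^ 2) * Real.exp (β ^ 2 / 2) * Phi β = β)
    (ht : t ∈ Set.Ico (0 : ℝ) 1) :
    ∃ L : NNReal, LipschitzWith L (fun r => vr β r t z) := by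
  have hroot' : (1 - β ^ 2) * cdfPdfRatio β = β := by
    unfold cdfPdfRatio; linear_combination hroot
  obtain ⟨K, hK⟩ := lipschitzWith_vrProfile hroot'
  refine ⟨1 + K, ?_⟩
  simpa only [vr_eq_add_mul_vrProfile β _ z ht.2] using
    hK.add_mul_comp_div (sqrt_pos.2 (sub_pos.2 ht.2)) z

theorem stmt3 (β t z : ℝ) (hβ : 0 < β)
    (hroot : Real.sqrt (2 * Real.pi) * (1 - β ^ 2) * Real.exp (β ^ 2 / 2) * Phi β = β)
    (ht : t ∈ Set.Ico (0 : ℝ) 1) :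
    ∃ L : NNReal, LipschitzWith L (fun r => vr β r t z) :=
  stmt3_general β t z hroot ht
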